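/- arXiv:1808.03496 — 6 statements merged into one kernel-verified Lean document; each statement's English description precedes it below -/
import Mathlib

section
/- Let n, k, ℓ be natural numbers, let s : Fin n → (Fin k → ℕ) be a family of item-vectors, and let t : Fin k → ℕ be a target vector with t ≤ ∑_{i : Fin n} s i componentwise. Then there exists a subset S' ⊆ Fin n with |S'| ≤ ℓ and ∑_{i ∈ S'} s i ≥ t componentwise if and only if there exists a subset S'' ⊆ Fin n with |S''| ≥ n − ℓ and ∑_{i ∈ S''} s i ≤ (∑_{i : Fin n} s i) − t componentwise. (The two subsets can be taken to be complements of each other.) -/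
open Finset

section ComplementSums

variable {ι α : Type*} [Fintype ι] [DecidableEq ι]

theorem Finset.card_le_iff_sub_le_card_compl (S : Finset ι) (ℓ : ℕ) :
    #S ≤ ℓ ↔ Fintype.card ι - ℓ ≤ #Sᶜ := by
  have := S.card_le_univ
  rw [card_compl]
  omega

variable [AddCommMonoid α] [PartialOrder α] [ExistsAddOfLE α] [AddLeftMono α]
  [AddLeftReflectLE α] [Sub α] [OrderedSub α]

theorem Finset.le_sum_iff_sum_compl_le_tsub (S : Finset ι) (f : ι → α) {t : α}
    (ht : t ≤ ∑ i, f i) :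
    t ≤ ∑ i ∈ S, f i ↔ ∑ i ∈ Sᶜ, f i ≤ ∑ i, f i - t := by
  rw [← sum_add_sum_compl S f] at ht ⊢
  rw [le_tsub_iff_right ht, add_comm (∑ i ∈ S, f i), add_le_add_iff_left]

end ComplementSums

/-- The equivalence underlying the reduction from Multidimensional Relaxed
Subset Sum (MRSS) to Multidimensional Subset Sum (MSS). -/
theorem mrss_to_mss (n k ℓ : ℕ) (s : Fin n → Fin k → ℕ) (t : Fin k → ℕ)
    (ht : ∀ j, t j ≤ ∑ i, s i j) :
    (∃ S' : Finset (Fin n), S'.card ≤ ℓ ∧ ∀ j, t j ≤ ∑ i ∈ S', s i j) ↔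
    (∃ S'' : Finset (Fin n), n - ℓ ≤ S''.card ∧
      ∀ j, ∑ i ∈ S'', s i j ≤ (∑ i, s i j) - t j) := by
  refine (compl_involutive.toPerm _).exists_congr fun S => and_congr ?_ ?_
  · simpa using S.card_le_iff_sub_le_card_compl ℓ
  · exact forall_congr' fun j => S.le_sum_iff_sum_compl_le_tsub (s · j) (ht j)
end

section
/- Let (G,P) be an EDP instance and let v,a,b be vertices of G such that the neighborhood of v is exactly {a,b} with a ≠ b, the edge {a,b} is not in G, and v occurs in no terminal pair of P. Let G' be the graph obtained from G by deleting v and adding the edge {a,b} (i.e., suppressing the degree-2 vertex v). Then (G,P) is a YES-instance of EDP if and only if (G', P) is a YES-instance of EDP. -/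
/-!
A walk of the suppressed graph becomes a walk of `G` by subdividing every traversal of the new
edge `ab` with `v`. Because `ab` is not an edge of `G` and `v` is a non-terminal vertex whose only
neighbours are `a` and `b`, a path of `G` can only pass through `v` as `a v b` or `b v a`, so every
solution path of `G` is such a subdivision, and subdivision maps paths to paths. Edge-disjointness
transfers both ways: collapsing the two edges at `v` to `ab` sends each edge of a subdivided walk
to an edge of the original one, and each edge `e` of a walk of the suppressed graph yields the edge
`e` (or `va`, if `e = ab`) of its subdivision.
-/

/-- A solution to an instance `(G, P)` of the Edge Disjoint Paths problem:
a family of paths, one per terminal pair, that are pairwise edge-disjoint. -/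
def EDPSolution {V ι : Type*} (G : SimpleGraph V) (P : ι → V × V)
    (W : ∀ i : ι, G.Walk (P i).1 (P i).2) : Prop :=
  (∀ i, (W i).IsPath) ∧
    ∀ i j, i ≠ j → ∀ e ∈ (W i).edges, e ∉ (W j).edges

/-- `(G, P)` is a YES-instance of the Edge Disjoint Paths problem. -/
def EDPYes {V ι : Type*} (G : SimpleGraph V) (P : ι → V × V) : Prop :=
  ∃ W : ∀ i : ι, G.Walk (P i).1 (P i).2, EDPSolution G P W

namespace SimpleGraph

variable {V : Type*} {G : SimpleGraph V} {v a b : V}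

abbrev suppress (G : SimpleGraph V) (v a b : V) : SimpleGraph ({v}ᶜ : Set V) :=
  G.induce {v}ᶜ ⊔ fromRel (fun p q => (p : V) = a ∧ (q : V) = b)

theorem suppress_adj {x y : ({v}ᶜ : Set V)} :
    (G.suppress v a b).Adj x y ↔ G.Adj x y ∨ x ≠ y ∧ s((x : V), y) = s(a, b) := by
  simp only [sup_adj, induce_adj, fromRel_adj, Sym2.eq_iff]
  grind

theorem adj_of_mem_mk (hva : G.Adj v a) (hvb : G.Adj v b) {u : V} (hu : u ∈ s(a, b)) :
    G.Adj v u :=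
  (Sym2.mem_iff.1 hu).elim (· ▸ hva) (· ▸ hvb)

theorem mk_eq_of_adj_of_adj (hN : ∀ u, G.Adj v u → u = a ∨ u = b) {x y : V}
    (hx : G.Adj v x) (hy : G.Adj v y) (hxy : x ≠ y) : s(x, y) = s(a, b) := by
  rcases hN x hx with rfl | rfl <;> rcases hN y hy with rfl | rfl
  all_goals first | exact absurd rfl hxy | rfl | exact Sym2.eq_swap

namespace Walk

variable [DecidableEq V] (hva : G.Adj v a) (hvb : G.Adj v b)

def subdivide : ∀ {x y : ({v}ᶜ : Set V)}, (G.suppress v a b).Walk x y → G.Walk x y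
  | _, _, .nil => .nil
  | x, _, .cons (v := y) h p =>
    if hxy : s((x : V), y) = s(a, b) then
      .cons (adj_of_mem_mk hva hvb (hxy ▸ Sym2.mem_mk_left _ _)).symm
        (.cons (adj_of_mem_mk hva hvb (hxy ▸ Sym2.mem_mk_right _ _)) (subdivide p))
    else .cons ((suppress_adj.1 h).resolve_right fun h' => hxy h'.2) (subdivide p)

variable {hva hvb} {x y z : ({v}ᶜ : Set V)}

theorem subdivide_cons_of_eq (h : (G.suppress v a b).Adj x y) (p : (G.suppress v a b).Walk y z)
    (hxy : s((x : V), y) = s(a, b)) :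
    (cons h p).subdivide hva hvb =
      .cons (adj_of_mem_mk hva hvb (hxy ▸ Sym2.mem_mk_left _ _)).symm
        (.cons (adj_of_mem_mk hva hvb (hxy ▸ Sym2.mem_mk_right _ _)) (p.subdivide hva hvb)) := by
  rw [subdivide, dif_pos hxy]

theorem subdivide_cons_of_ne (h : (G.suppress v a b).Adj x y) (p : (G.suppress v a b).Walk y z)
    (hxy : s((x : V), y) ≠ s(a, b)) :
    (cons h p).subdivide hva hvb =
      .cons ((suppress_adj.1 h).resolve_right fun h' => hxy h'.2) (p.subdivide hva hvb) := by
  rw [subdivide, dif_neg hxy]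

theorem support_subdivide_subset (p : (G.suppress v a b).Walk x y) :
    (p.subdivide hva hvb).support ⊆ v :: p.support.map Subtype.val := by
  induction p with
  | nil => simp [subdivide]
  | @cons x y z h p ih =>
    by_cases hxy : s((x : V), y) = s(a, b)
    · rw [subdivide_cons_of_eq h p hxy]
      simp only [support_cons, List.map_cons]
      grind
    · rw [subdivide_cons_of_ne h p hxy]
      simp only [support_cons, List.map_cons]
      grind

theorem sublist_support_subdivide (p : (G.suppress v a b).Walk x y) :
    (p.support.map Subtype.val).Sublist (p.subdivide hva hvb).support := by
  induction p with
  | nil => simp [subdivide]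
  | @cons x y z h p ih =>
    by_cases hxy : s((x : V), y) = s(a, b)
    · rw [subdivide_cons_of_eq h p hxy]
      exact (ih.cons _).cons_cons _
    · rw [subdivide_cons_of_ne h p hxy]
      exact ih.cons_cons _

theorem contract_mem_edges_of_mem_edges_subdivide {p : (G.suppress v a b).Walk x y} {e : Sym2 V}
    (he : e ∈ (p.subdivide hva hvb).edges) :
    (if v ∈ e then s(a, b) else e) ∈ p.edges.map (Sym2.map Subtype.val) := by
  induction p with
  | nil => simp [subdivide] at he
  | @cons x y z h p ih =>
    by_cases hxy : s((x : V), y) = s(a, b)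
    · rw [subdivide_cons_of_eq h p hxy] at he
      simp only [edges_cons, List.mem_cons] at he
      rcases he with rfl | rfl | he
      · simp [← hxy]
      · simp [← hxy]
      · exact List.mem_cons_of_mem _ (ih he)
    · rw [subdivide_cons_of_ne h p hxy] at he
      simp only [edges_cons, List.mem_cons] at he
      rcases he with rfl | he
      · have hvxy : v ∉ s((x : V), y) := by
          rw [Sym2.mem_iff]
          exact fun h => h.elim (x.2 ∘ Eq.symm) (y.2 ∘ Eq.symm)
        simp [hvxy]
      · exact List.mem_cons_of_mem _ (ih he)

theorem expand_mem_edges_subdivide {p : (G.suppress v a b).Walk x y} {e : Sym2 ({v}ᶜ : Set V)}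
    (he : e ∈ p.edges) :
    (if e.map Subtype.val = s(a, b) then s(v, a) else e.map Subtype.val) ∈
      (p.subdivide hva hvb).edges := by
  induction p with
  | nil => simp at he
  | @cons x y z h p ih =>
    by_cases hxy : s((x : V), y) = s(a, b)
    · rw [subdivide_cons_of_eq h p hxy]
      simp only [edges_cons, List.mem_cons] at he ⊢
      rcases he with rfl | he
      · simp only [Sym2.map_mk, hxy, if_true]
        rcases Sym2.eq_iff.1 hxy with ⟨rfl, -⟩ | ⟨-, rfl⟩
        · exact Or.inl Sym2.eq_swap
        · exact Or.inr (Or.inl rfl)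
      · exact Or.inr (Or.inr (ih he))
    · rw [subdivide_cons_of_ne h p hxy]
      simp only [edges_cons, List.mem_cons] at he ⊢
      rcases he with rfl | he
      · simp [hxy]
      · exact Or.inr (ih he)

theorem mk_mem_edges_of_mem_support_subdivide {p : (G.suppress v a b).Walk x y}
    (hv : v ∈ (p.subdivide hva hvb).support) :
    s(a, b) ∈ p.edges.map (Sym2.map Subtype.val) := by
  obtain hvy | ⟨e, he, hve⟩ := mem_support_iff_exists_mem_edges.1 hv
  · exact absurd hvy.symm y.2
  · simpa [hve] using contract_mem_edges_of_mem_edges_subdivide he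

theorem IsPath.subdivide {p : (G.suppress v a b).Walk x y} (hp : p.IsPath) :
    (p.subdivide hva hvb).IsPath := by
  induction p with
  | nil => exact .nil
  | @cons x y z h p ih =>
    rw [cons_isPath_iff] at hp
    have hx : (x : V) ∉ (p.subdivide hva hvb).support := fun hx =>
      (List.mem_cons.1 (support_subdivide_subset p hx)).elim x.2
        fun hx => hp.2 ((List.mem_map_of_injective Subtype.val_injective).1 hx)
    by_cases hxy : s((x : V), y) = s(a, b)
    · have hv : v ∉ (p.subdivide hva hvb).support := fun hv => by
        obtain ⟨e, he, hee⟩ := List.mem_map.1 (mk_mem_edges_of_mem_support_subdivide hv)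
        rw [← hxy, ← Sym2.map_mk] at hee
        rw [Sym2.map.injective Subtype.val_injective hee] at he
        exact hp.2 (p.fst_mem_support_of_mem_edges he)
      rw [subdivide_cons_of_eq h p hxy, cons_isPath_iff, cons_isPath_iff, support_cons]
      exact ⟨⟨ih hp.1, hv⟩, fun hx' => (List.mem_cons.1 hx').elim x.2 hx⟩
    · rw [subdivide_cons_of_ne h p hxy, cons_isPath_iff]
      exact ⟨ih hp.1, hx⟩

theorem IsPath.of_subdivide {p : (G.suppress v a b).Walk x y}
    (hp : (p.subdivide hva hvb).IsPath) : p.IsPath :=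
  (isPath_def _).2 (((sublist_support_subdivide p).nodup hp.support_nodup).of_map _)

end Walk

open Walk in
theorem exists_subdivide_eq [DecidableEq V] (hva : G.Adj v a) (hvb : G.Adj v b)
    (hN : ∀ u, G.Adj v u → u = a ∨ u = b) (hnadj : ¬G.Adj a b) :
    ∀ {x y : V} (W : G.Walk x y), W.IsPath → (hx : x ≠ v) → (hy : y ≠ v) →
      ∃ W' : (G.suppress v a b).Walk ⟨x, hx⟩ ⟨y, hy⟩, W'.subdivide hva hvb = W
  | _, _, .nil, _, _, _ => ⟨.nil, rfl⟩
  | x, y, .cons (v := z) hxz p, hW, hx, hy => by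
    by_cases hz : z = v
    · cases p with
      | nil => exact absurd hz hy
      | @cons _ w _ hzw q =>
        have hxw : x ≠ w := by
          rintro rfl
          exact ((cons_isPath_iff _ _).1 hW).2 (by simp)
        have hxw' : s(x, w) = s(a, b) :=
          mk_eq_of_adj_of_adj hN (hz ▸ hxz.symm) (hz ▸ hzw) hxw
        obtain ⟨q', rfl⟩ :=
          exists_subdivide_eq hva hvb hN hnadj q hW.of_cons.of_cons (hz ▸ hzw).ne' hy
        have hadj : (G.suppress v a b).Adj ⟨x, hx⟩ ⟨w, (hz ▸ hzw).ne'⟩ :=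
          suppress_adj.2 (Or.inr ⟨fun h => hxw (congrArg Subtype.val h), hxw'⟩)
        refine ⟨.cons hadj q', ?_⟩
        rw [subdivide_cons_of_eq _ _ hxw']
        subst hz
        rfl
    · have hxz' : s(x, z) ≠ s(a, b) := fun h =>
        hnadj (G.mem_edgeSet.1 (h ▸ G.mem_edgeSet.2 hxz))
      obtain ⟨p', rfl⟩ := exists_subdivide_eq hva hvb hN hnadj p hW.of_cons hz hy
      exact ⟨.cons (suppress_adj.2 (Or.inl hxz)) p', subdivide_cons_of_ne _ _ hxz'⟩
termination_by _ _ W => W.length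

open Walk in
theorem edpSolution_subdivide_iff [DecidableEq V] (hva : G.Adj v a) (hvb : G.Adj v b)
    {ι : Type*} {Q : ι → ({v}ᶜ : Set V) × ({v}ᶜ : Set V)}
    {W : ∀ i, (G.suppress v a b).Walk (Q i).1 (Q i).2} :
    EDPSolution G (fun i => ((Q i).1, (Q i).2)) (fun i => (W i).subdivide hva hvb) ↔
      EDPSolution (G.suppress v a b) Q W := by
  constructor
  · rintro ⟨hpath, hdisj⟩
    exact ⟨fun i => (hpath i).of_subdivide, fun i j hij e hi hj =>
      hdisj i j hij _ (expand_mem_edges_subdivide hi) (expand_mem_edges_subdivide hj)⟩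
  · rintro ⟨hpath, hdisj⟩
    refine ⟨fun i => (hpath i).subdivide, fun i j hij e hi hj => ?_⟩
    obtain ⟨e₁, he₁, hee₁⟩ :=
      List.mem_map.1 (contract_mem_edges_of_mem_edges_subdivide hi)
    obtain ⟨e₂, he₂, hee₂⟩ :=
      List.mem_map.1 (contract_mem_edges_of_mem_edges_subdivide hj)
    rw [← Sym2.map.injective Subtype.val_injective (hee₁.trans hee₂.symm)] at he₂
    exact hdisj i j hij e₁ he₁ he₂

end SimpleGraph

theorem suppress_degree_two_general {V : Type*} (G : SimpleGraph V) {m : ℕ}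
    (P : Fin m → V × V) (v a b : V)
    (hva : G.Adj v a) (hvb : G.Adj v b)
    (hN : ∀ x, G.Adj v x → x = a ∨ x = b) (hnadj : ¬ G.Adj a b)
    (hocc : ∀ i, (P i).1 ≠ v ∧ (P i).2 ≠ v) :
    EDPYes G P ↔
      EDPYes
        ((G.induce {v}ᶜ) ⊔
          SimpleGraph.fromRel (fun p q => (p : V) = a ∧ (q : V) = b))
        (fun i => (⟨(P i).1, (hocc i).1⟩, ⟨(P i).2, (hocc i).2⟩)) := by
  classical
  constructor
  · rintro ⟨W, hW⟩
    choose W' hW' using fun i =>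
      SimpleGraph.exists_subdivide_eq hva hvb hN hnadj (W i) (hW.1 i) (hocc i).1 (hocc i).2
    refine ⟨W', (SimpleGraph.edpSolution_subdivide_iff hva hvb).1 ?_⟩
    rwa [show (fun i => (W' i).subdivide hva hvb) = W from funext hW']
  · rintro ⟨W', hW'⟩
    exact ⟨_, (SimpleGraph.edpSolution_subdivide_iff hva hvb).2 hW'⟩

/-- Suppressing a degree-2 non-terminal vertex `v` with neighborhood exactly
`{a, b}`, where `a ≠ b` and `{a, b}` is not an edge of `G`, preserves the
answer to EDP: delete `v` and add the edge `{a, b}`. -/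
theorem suppress_degree_two {V : Type*} (G : SimpleGraph V) {m : ℕ}
    (P : Fin m → V × V) (v a b : V)
    (hva : G.Adj v a) (hvb : G.Adj v b) (hab : a ≠ b)
    (hN : ∀ x, G.Adj v x → x = a ∨ x = b) (hnadj : ¬ G.Adj a b)
    (hocc : ∀ i, (P i).1 ≠ v ∧ (P i).2 ≠ v) :
    EDPYes G P ↔
      EDPYes
        ((G.induce {v}ᶜ) ⊔
          SimpleGraph.fromRel (fun p q => (p : V) = a ∧ (q : V) = b))
        (fun i => (⟨(P i).1, (hocc i).1⟩, ⟨(P i).2, (hocc i).2⟩)) :=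
  suppress_degree_two_general G P v a b hva hvb hN hnadj hocc
end

section
/- Let (G,P) be an EDP instance, let a ≠ b be vertices of G each of degree 1 whose unique neighbor is the same vertex c (so N(a) = N(b) = {c}), and suppose there is exactly one index i₀ whose terminal pair is {a,b} and that a and b occur in no terminal pair other than pair i₀. Then (G,P) is a YES-instance of EDP if and only if (G − {a,b}, P') is a YES-instance of EDP, where G − {a,b} deletes the vertices a and b and P' is P with the pair indexed by i₀ removed. -/
open SimpleGraph

namespace SimpleGraph.Walk

variable {V : Type*} {G : SimpleGraph V} {u v a : V}

theorem IsPath.notMem_support_of_subsingleton_neighborSet {p : G.Walk u v} (hp : p.IsPath)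
    (ha : (G.neighborSet a).Subsingleton) (hu : u ≠ a) (hv : v ≠ a) : a ∉ p.support := by
  rw [mem_support_iff_exists_getVert]
  rintro ⟨n, rfl, hn⟩
  have h0 : n ≠ 0 := by rintro rfl; exact hu (getVert_zero p).symm
  have hlt : n < p.length := lt_of_le_of_ne hn (by rintro rfl; exact hv (getVert_length p).symm)
  have hsub : (p.toSubgraph.neighborSet (p.getVert n)).Subsingleton :=
    ha.anti (p.toSubgraph.neighborSet_subset _)
  have := hp.ncard_neighborSet_toSubgraph_internal_eq_two h0 hlt
  have := (Set.ncard_le_one hsub.finite).2 fun x hx y hy => hsub hx hy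
  omega

theorem isPath_cons_cons_nil {b c : V} (hab : a ≠ b) (hac : G.Adj a c) (hbc : G.Adj b c) :
    (cons hac (cons hbc.symm nil)).IsPath := by
  simp [isPath_def, hac.ne, hab, hbc.ne']

end SimpleGraph.Walk

section EDP

variable {V V' ι : Type*} {G : SimpleGraph V} {P : ι → V × V}

theorem EDPSolution.map_iff {G' : SimpleGraph V'} (f : G ↪g G')
    {W : ∀ i, G.Walk (P i).1 (P i).2} :
    EDPSolution G' (fun i => (f (P i).1, f (P i).2)) (fun i => (W i).map f.toHom) ↔
      EDPSolution G P W := by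
  have hf : Function.Injective f.toHom := f.injective
  simp only [EDPSolution, Walk.isPath_map_iff_of_injective hf, Walk.edges_map,
    List.forall_mem_map, List.mem_map_of_injective (Sym2.map.injective hf)]

theorem EDPSolution.comp {κ : Type*} {W : ∀ i, G.Walk (P i).1 (P i).2} (hW : EDPSolution G P W)
    {σ : κ → ι} (hσ : Function.Injective σ) :
    EDPSolution G (P ∘ σ) (fun k => W (σ k)) :=
  ⟨fun k => hW.1 (σ k), fun k l hkl => hW.2 (σ k) (σ l) (hσ.ne hkl)⟩

theorem EDPSolution.edpYes_of_isPath [DecidableEq ι] {i₀ : ι}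
    {W : ∀ i : {i // i ≠ i₀}, G.Walk (P i).1 (P i).2}
    (hW : EDPSolution G (fun i : {i // i ≠ i₀} => P i) W)
    {p : G.Walk (P i₀).1 (P i₀).2} (hp : p.IsPath)
    (hdisj : ∀ i, ∀ e ∈ p.edges, e ∉ (W i).edges) : EDPYes G P := by
  let W' : ∀ i, G.Walk (P i).1 (P i).2 := fun i => if h : i = i₀ then h ▸ p else W ⟨i, h⟩
  have hW'₀ : W' i₀ = p := dif_pos rfl
  have hW' : ∀ i (h : i ≠ i₀), W' i = W ⟨i, h⟩ := fun i h => dif_neg h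
  refine ⟨W', fun i => ?_, fun i j hij e hi hj => ?_⟩
  · obtain rfl | h := eq_or_ne i i₀
    · rwa [hW'₀]
    · rw [hW' i h]; exact hW.1 _
  · obtain rfl | hi₀ := eq_or_ne i i₀
    · rw [hW'₀] at hi; rw [hW' j hij.symm] at hj; exact hdisj _ e hi hj
    obtain rfl | hj₀ := eq_or_ne j i₀
    · rw [hW'₀] at hj; rw [hW' i hi₀] at hi; exact hdisj _ e hj hi
    rw [hW' i hi₀] at hi; rw [hW' j hj₀] at hj
    exact hW.2 ⟨i, hi₀⟩ ⟨j, hj₀⟩ (by simpa using hij) e hi hj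

end EDP

/-- Twin-leaf reduction: if `a ≠ b` are leaves with the same unique neighbor
`c`, `{a, b}` is the terminal pair at index `i₀`, and `a, b` occur in no
other terminal pair, then deleting `a`, `b` and the pair `i₀` preserves the
answer to EDP. -/
theorem twin_leaf_reduction {V : Type*} (G : SimpleGraph V) {m : ℕ}
    (P : Fin m → V × V) (a b c : V) (hab : a ≠ b)
    (hac : G.Adj a c) (hbc : G.Adj b c)
    (hNa : ∀ x, G.Adj a x → x = c) (hNb : ∀ x, G.Adj b x → x = c)
    (i₀ : Fin m) (hi₀ : P i₀ = (a, b) ∨ P i₀ = (b, a))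
    (hocc : ∀ i, i ≠ i₀ →
      (P i).1 ≠ a ∧ (P i).1 ≠ b ∧ (P i).2 ≠ a ∧ (P i).2 ≠ b) :
    EDPYes G P ↔
      EDPYes (G.induce ({a, b}ᶜ))
        (fun i : {i : Fin m // i ≠ i₀} =>
          (⟨(P i.1).1, fun h => h.elim (hocc i.1 i.2).1 (hocc i.1 i.2).2.1⟩,
           ⟨(P i.1).2,
             fun h => h.elim (hocc i.1 i.2).2.2.1 (hocc i.1 i.2).2.2.2⟩)) := by
  have ha : (G.neighborSet a).Subsingleton := fun x hx y hy => (hNa x hx).trans (hNa y hy).symm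
  have hb : (G.neighborSet b).Subsingleton := fun x hx y hy => (hNb x hx).trans (hNb y hy).symm
  constructor
  · rintro ⟨W, hW⟩
    have hs : ∀ i : {i // i ≠ i₀}, ∀ x ∈ (W i).support, x ∈ ({a, b}ᶜ : Set V) := by
      rintro ⟨i, hi⟩ x hx (rfl | rfl)
      · exact (hW.1 i).notMem_support_of_subsingleton_neighborSet ha (hocc i hi).1
          (hocc i hi).2.2.1 hx
      · exact (hW.1 i).notMem_support_of_subsingleton_neighborSet hb (hocc i hi).2.1
          (hocc i hi).2.2.2 hx
    refine ⟨fun i => (W i).induce _ (hs i), (EDPSolution.map_iff (Embedding.induce _)).1 ?_⟩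
    simp only [Walk.map_induce]
    exact hW.comp Subtype.val_injective
  · rintro ⟨W, hW⟩
    obtain ⟨p, hp, hpe⟩ : ∃ p : G.Walk (P i₀).1 (P i₀).2,
        p.IsPath ∧ ∀ e ∈ p.edges, a ∈ e ∨ b ∈ e := by
      rcases hi₀ with h | h <;> rw [h]
      · exact ⟨_, Walk.isPath_cons_cons_nil hab hac hbc, by simp⟩
      · exact ⟨_, Walk.isPath_cons_cons_nil hab.symm hbc hac, by simp [or_comm]⟩
    refine ((EDPSolution.map_iff (Embedding.induce _)).2 hW).edpYes_of_isPath hp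
      fun i e he he' => ?_
    obtain ⟨e', -, rfl⟩ := List.mem_map.1 ((W i).edges_map _ ▸ he')
    obtain ⟨x, -, hx⟩ | ⟨x, -, hx⟩ := (hpe _ he).imp Sym2.mem_map.1 Sym2.mem_map.1
    all_goals exact x.2 (by simp [← hx])
end

section
/- Let (G,P) be an EDP instance in which every terminal pair has two distinct endpoints, and let {a,b} be an edge of G such that: a and b each have degree at most 2 in G, no terminal pair of P equals {a,b}, and each of a and b occurs in at least one terminal pair of P. Then no solution of (G,P) uses the edge {a,b}; consequently (G,P) is a YES-instance of EDP if and only if (G − e, P) is a YES-instance of EDP, where G − e is obtained from G by deleting the edge {a,b}. -/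
/-!
A path through the edge `{a, b}` has one of `a`, `b` as an internal vertex, since `{a, b}` is not
a terminal pair; say `a`. That path then uses two edges at `a`, and the path of a pair having `a`
as a terminal uses a third one, which is impossible when `a` has degree at most 2. So a solution
never uses `{a, b}`, and solutions of `(G, P)` and of `(G - {a, b}, P)` correspond.
-/

namespace SimpleGraph

variable {V : Type*} {G : SimpleGraph V}

theorem two_lt_degree_of_mem_incidenceSet [Fintype V] [DecidableRel G.Adj] {x : V}
    {e₁ e₂ e₃ : Sym2 V} (h₁ : e₁ ∈ G.incidenceSet x) (h₂ : e₂ ∈ G.incidenceSet x)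
    (h₃ : e₃ ∈ G.incidenceSet x) (h₁₂ : e₁ ≠ e₂) (h₁₃ : e₁ ≠ e₃) (h₂₃ : e₂ ≠ e₃) :
    2 < G.degree x := by
  classical
  rw [← card_incidenceFinset_eq_degree, Finset.two_lt_card]
  simp only [mem_incidenceFinset]
  exact ⟨e₁, h₁, e₂, h₂, e₃, h₃, h₁₂, h₁₃, h₂₃⟩

namespace Walk

theorem exists_mem_edges_mem_of_endpoint {u v x : V} (p : G.Walk u v) (huv : u ≠ v)
    (hx : u = x ∨ v = x) : ∃ e ∈ p.edges, x ∈ e := by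
  rcases hx with rfl | rfl
  · exact ⟨_, p.mk_start_snd_mem_edges (p.not_nil_of_ne huv), Sym2.mem_mk_left _ _⟩
  · exact ⟨_, p.mk_penultimate_end_mem_edges (p.not_nil_of_ne huv), Sym2.mem_mk_right _ _⟩

theorem IsPath.exists_two_mem_edges_of_mem_support {u v x : V} {p : G.Walk u v}
    (hp : p.IsPath) (hx : x ∈ p.support) (hxu : x ≠ u) (hxv : x ≠ v) :
    ∃ e₁ ∈ p.edges, ∃ e₂ ∈ p.edges, e₁ ≠ e₂ ∧ x ∈ e₁ ∧ x ∈ e₂ := by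
  classical
  obtain ⟨e₁, he₁, hxe₁⟩ :=
    (p.takeUntil x hx).exists_mem_edges_mem_of_endpoint hxu.symm (Or.inr rfl)
  obtain ⟨e₂, he₂, hxe₂⟩ :=
    (p.dropUntil x hx).exists_mem_edges_mem_of_endpoint hxv (Or.inl rfl)
  have hsplit := p.take_spec hx
  have hnodup := hp.isTrail.edges_nodup
  rw [← hsplit, edges_append, List.nodup_append] at hnodup
  rw [← hsplit, edges_append]
  exact ⟨e₁, List.mem_append_left _ he₁, e₂, List.mem_append_right _ he₂,
    hnodup.2.2 _ he₁ _ he₂, hxe₁, hxe₂⟩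

end Walk

end SimpleGraph

open SimpleGraph

namespace EDPSolution

variable {V ι : Type*} {G : SimpleGraph V} {P : ι → V × V} {W : ∀ i, G.Walk (P i).1 (P i).2}

theorem two_lt_degree_of_internal_of_terminal [Fintype V] [DecidableRel G.Adj]
    (hsol : EDPSolution G P W) {i j : ι} {x : V} (hx : x ∈ (W i).support)
    (hx₁ : x ≠ (P i).1) (hx₂ : x ≠ (P i).2) (hj : (P j).1 ≠ (P j).2)
    (hxj : (P j).1 = x ∨ (P j).2 = x) : 2 < G.degree x := by
  obtain ⟨e₁, he₁, e₂, he₂, h₁₂, hxe₁, hxe₂⟩ :=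
    (hsol.1 i).exists_two_mem_edges_of_mem_support hx hx₁ hx₂
  obtain ⟨e₃, he₃, hxe₃⟩ := (W j).exists_mem_edges_mem_of_endpoint hj hxj
  have hji : j ≠ i := by
    rintro rfl
    rcases hxj with h | h
    exacts [hx₁ h.symm, hx₂ h.symm]
  have he₃i : e₃ ∉ (W i).edges := hsol.2 j i hji e₃ he₃
  exact two_lt_degree_of_mem_incidenceSet ⟨(W i).edges_subset_edgeSet he₁, hxe₁⟩
    ⟨(W i).edges_subset_edgeSet he₂, hxe₂⟩ ⟨(W j).edges_subset_edgeSet he₃, hxe₃⟩ h₁₂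
    (fun h => he₃i (h ▸ he₁)) (fun h => he₃i (h ▸ he₂))

theorem mk_notMem_edges_of_degree_le_two [Fintype V] [DecidableRel G.Adj]
    (hsol : EDPSolution G P W) (hdist : ∀ i, (P i).1 ≠ (P i).2) {a b : V}
    (hda : G.degree a ≤ 2) (hdb : G.degree b ≤ 2)
    (hoa : ∃ i, (P i).1 = a ∨ (P i).2 = a) (hob : ∃ i, (P i).1 = b ∨ (P i).2 = b) (i : ι)
    (hnotpair : ¬((P i).1 = a ∧ (P i).2 = b) ∧ ¬((P i).1 = b ∧ (P i).2 = a)) :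
    s(a, b) ∉ (W i).edges := by
  intro he
  have hab : a ≠ b := G.ne_of_adj ((W i).adj_of_mem_edges he)
  have hinternal : (a ≠ (P i).1 ∧ a ≠ (P i).2) ∨ (b ≠ (P i).1 ∧ b ≠ (P i).2) := by
    grind
  obtain ⟨j, hj⟩ := hoa
  obtain ⟨k, hk⟩ := hob
  rcases hinternal with ⟨ha₁, ha₂⟩ | ⟨hb₁, hb₂⟩
  · have := hsol.two_lt_degree_of_internal_of_terminal
      ((W i).fst_mem_support_of_mem_edges he) ha₁ ha₂ (hdist j) hj
    omega
  · have := hsol.two_lt_degree_of_internal_of_terminal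
      ((W i).snd_mem_support_of_mem_edges he) hb₁ hb₂ (hdist k) hk
    omega

theorem transfer (hsol : EDPSolution G P W) {H : SimpleGraph V}
    (hW : ∀ i, ∀ e ∈ (W i).edges, e ∈ H.edgeSet) :
    EDPSolution H P (fun i => (W i).transfer H (hW i)) := by
  refine ⟨fun i => (hsol.1 i).transfer _, fun i j hij e => ?_⟩
  simp only [Walk.edges_transfer]
  exact hsol.2 i j hij e

theorem edpYes_deleteEdges (hsol : EDPSolution G P W) {s : Set (Sym2 V)}
    (hs : ∀ i, ∀ e ∈ s, e ∉ (W i).edges) : EDPYes (G.deleteEdges s) P :=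
  ⟨_, hsol.transfer fun i e he => by
    rw [edgeSet_deleteEdges]
    exact ⟨(W i).edges_subset_edgeSet he, fun hes => hs i e hes he⟩⟩

end EDPSolution

theorem EDPYes.mono {V ι : Type*} {G H : SimpleGraph V} {P : ι → V × V} (hGH : G ≤ H)
    (h : EDPYes G P) : EDPYes H P :=
  let ⟨W, hsol⟩ := h
  ⟨_, hsol.transfer fun i _ he => edgeSet_mono hGH ((W i).edges_subset_edgeSet he)⟩

theorem unused_edge_between_terminals_general {V : Type*} [Fintype V]
    (G : SimpleGraph V) [DecidableRel G.Adj] {m : ℕ} (P : Fin m → V × V)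
    (hdist : ∀ i, (P i).1 ≠ (P i).2) (a b : V)
    (hda : G.degree a ≤ 2) (hdb : G.degree b ≤ 2)
    (hnotpair : ∀ i, ¬((P i).1 = a ∧ (P i).2 = b) ∧
      ¬((P i).1 = b ∧ (P i).2 = a))
    (hoa : ∃ i, (P i).1 = a ∨ (P i).2 = a)
    (hob : ∃ i, (P i).1 = b ∨ (P i).2 = b) :
    (∀ (W : ∀ i : Fin m, G.Walk (P i).1 (P i).2), EDPSolution G P W →
        ∀ i, s(a, b) ∉ (W i).edges) ∧
      (EDPYes G P ↔ EDPYes (G.deleteEdges {s(a, b)}) P) := by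
  have unused : ∀ (W : ∀ i : Fin m, G.Walk (P i).1 (P i).2), EDPSolution G P W →
      ∀ i, s(a, b) ∉ (W i).edges := fun _ hsol i =>
    hsol.mk_notMem_edges_of_degree_le_two hdist hda hdb hoa hob i (hnotpair i)
  refine ⟨unused, fun ⟨W, hsol⟩ => hsol.edpYes_deleteEdges ?_, EDPYes.mono (G.deleteEdges_le _)⟩
  rintro i e rfl
  exact unused W hsol i

/-- If `{a, b}` is an edge between two vertices of degree at most 2, no
terminal pair equals `{a, b}`, each of `a` and `b` occurs in at least one
terminal pair, and all terminal pairs have distinct endpoints, then no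
solution uses the edge `{a, b}`; consequently deleting that edge preserves
the answer to EDP. -/
theorem unused_edge_between_terminals {V : Type*} [Fintype V] [DecidableEq V]
    (G : SimpleGraph V) [DecidableRel G.Adj] {m : ℕ} (P : Fin m → V × V)
    (hdist : ∀ i, (P i).1 ≠ (P i).2) (a b : V) (hab : G.Adj a b)
    (hda : G.degree a ≤ 2) (hdb : G.degree b ≤ 2)
    (hnotpair : ∀ i, ¬((P i).1 = a ∧ (P i).2 = b) ∧
      ¬((P i).1 = b ∧ (P i).2 = a))
    (hoa : ∃ i, (P i).1 = a ∨ (P i).2 = a)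
    (hob : ∃ i, (P i).1 = b ∨ (P i).2 = b) :
    (∀ (W : ∀ i : Fin m, G.Walk (P i).1 (P i).2), EDPSolution G P W →
        ∀ i, s(a, b) ∉ (W i).edges) ∧
      (EDPYes G P ↔ EDPYes (G.deleteEdges {s(a, b)}) P) :=
  unused_edge_between_terminals_general G P hdist a b hda hdb hnotpair hoa hob
end

section
/- Let (G,P) be an EDP instance in which every terminal pair has two distinct endpoints, and let {a,b} be an edge of G such that: a and b each have degree at most 2 in G, no terminal pair of P equals {a,b}, a occurs in at least one terminal pair of P, and b occurs in at least two terminal pairs of P (counted over the index set). Then (G,P) is a NO-instance of EDP, i.e., no solution exists. -/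
namespace SimpleGraph

variable {V : Type*} {G : SimpleGraph V}

theorem eq_or_eq_of_mem_incidenceSet_of_degree_le_two [DecidableEq V] {x : V}
    [Fintype (G.neighborSet x)] (hx : G.degree x ≤ 2) {e e₁ e₂ : Sym2 V}
    (he : e ∈ G.incidenceSet x) (he₁ : e₁ ∈ G.incidenceSet x) (he₂ : e₂ ∈ G.incidenceSet x)
    (h₁₂ : e₁ ≠ e₂) : e = e₁ ∨ e = e₂ := by
  by_contra! h
  have hsub : ({e, e₁, e₂} : Finset (Sym2 V)) ⊆ G.incidenceFinset x := by
    simp [Finset.insert_subset_iff, he, he₁, he₂]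
  have hcard := Finset.card_le_card hsub
  rw [Finset.card_insert_of_notMem (by simp [h.1, h.2]), Finset.card_pair h₁₂,
    card_incidenceFinset_eq_degree] at hcard
  omega

namespace Walk

variable {u v x : V}

theorem mem_incidenceSet_of_mem_edges (p : G.Walk u v) {e : Sym2 V} (he : e ∈ p.edges)
    (hx : x ∈ e) : e ∈ G.incidenceSet x :=
  ⟨p.edges_subset_edgeSet he, hx⟩

theorem exists_mem_edges_incidenceSet_of_ne (p : G.Walk u v) (huv : u ≠ v)
    (hx : u = x ∨ v = x) : ∃ e ∈ p.edges, e ∈ G.incidenceSet x := by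
  have hnil : ¬p.Nil := not_nil_of_ne huv
  rcases hx with rfl | rfl
  · exact ⟨_, p.mk_start_snd_mem_edges hnil,
      p.mem_incidenceSet_of_mem_edges (p.mk_start_snd_mem_edges hnil) (Sym2.mem_mk_left _ _)⟩
  · exact ⟨_, p.mk_penultimate_end_mem_edges hnil,
      p.mem_incidenceSet_of_mem_edges (p.mk_penultimate_end_mem_edges hnil)
        (Sym2.mem_mk_right _ _)⟩

theorem IsPath.exists_ne_mem_edges_incidenceSet [DecidableEq V] {p : G.Walk u v}
    (hp : p.IsPath) (hx : x ∈ p.support) (hxu : x ≠ u) (hxv : x ≠ v) :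
    ∃ e₁ ∈ p.edges, ∃ e₂ ∈ p.edges, e₁ ≠ e₂ ∧ e₁ ∈ G.incidenceSet x ∧ e₂ ∈ G.incidenceSet x := by
  set q := p.takeUntil x hx
  set r := p.dropUntil x hx
  have hedges : p.edges = q.edges ++ r.edges := by rw [← edges_append, take_spec]
  have hq := q.mk_penultimate_end_mem_edges (not_nil_of_ne hxu.symm)
  have hr := r.mk_start_snd_mem_edges (not_nil_of_ne hxv)
  have hdisj := List.disjoint_of_nodup_append (hedges ▸ hp.edges_nodup)
  have hq' : s(q.penultimate, x) ∈ p.edges := hedges ▸ List.mem_append_left _ hq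
  have hr' : s(x, r.snd) ∈ p.edges := hedges ▸ List.mem_append_right _ hr
  exact ⟨_, hq', _, hr', fun h => hdisj hq (by rwa [h]),
    p.mem_incidenceSet_of_mem_edges hq' (Sym2.mem_mk_right _ _),
    p.mem_incidenceSet_of_mem_edges hr' (Sym2.mem_mk_left _ _)⟩

end Walk

end SimpleGraph

namespace EDPSolution

open SimpleGraph

variable {V ι : Type*} {G : SimpleGraph V} {P : ι → V × V} {W : ∀ i, G.Walk (P i).1 (P i).2}

theorem ne_of_mem_edges (hW : EDPSolution G P W) {i j : ι} (hij : i ≠ j) {e f : Sym2 V}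
    (he : e ∈ (W i).edges) (hf : f ∈ (W j).edges) : e ≠ f :=
  fun h => hW.2 i j hij e he (h ▸ hf)

variable [DecidableEq V] {x : V} [Fintype (G.neighborSet x)]

theorem mem_edges_or_mem_edges_of_degree_le_two (hW : EDPSolution G P W)
    (hx : G.degree x ≤ 2) {i j : ι} (hij : i ≠ j)
    (hdi : (P i).1 ≠ (P i).2) (hi : (P i).1 = x ∨ (P i).2 = x)
    (hdj : (P j).1 ≠ (P j).2) (hj : (P j).1 = x ∨ (P j).2 = x)
    {e : Sym2 V} (he : e ∈ G.incidenceSet x) : e ∈ (W i).edges ∨ e ∈ (W j).edges := by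
  obtain ⟨f₁, hf₁, hxf₁⟩ := (W i).exists_mem_edges_incidenceSet_of_ne hdi hi
  obtain ⟨f₂, hf₂, hxf₂⟩ := (W j).exists_mem_edges_incidenceSet_of_ne hdj hj
  rcases eq_or_eq_of_mem_incidenceSet_of_degree_le_two hx he hxf₁ hxf₂
    (hW.ne_of_mem_edges hij hf₁ hf₂) with rfl | rfl
  · exact Or.inl hf₁
  · exact Or.inr hf₂

theorem not_endpoint_of_mem_support_of_degree_le_two (hW : EDPSolution G P W)
    (hx : G.degree x ≤ 2) {j : ι} (hxj : x ∈ (W j).support)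
    (hj₁ : (P j).1 ≠ x) (hj₂ : (P j).2 ≠ x) (i : ι) (hdi : (P i).1 ≠ (P i).2) :
    ¬((P i).1 = x ∨ (P i).2 = x) := by
  intro hi
  have hij : i ≠ j := by
    rintro rfl
    exact hi.elim hj₁ hj₂
  obtain ⟨e₁, he₁, e₂, he₂, h₁₂, hxe₁, hxe₂⟩ :=
    (hW.1 j).exists_ne_mem_edges_incidenceSet hxj hj₁.symm hj₂.symm
  obtain ⟨f, hf, hxf⟩ := (W i).exists_mem_edges_incidenceSet_of_ne hdi hi
  rcases eq_or_eq_of_mem_incidenceSet_of_degree_le_two hx hxf hxe₁ hxe₂ h₁₂ with rfl | rfl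
  · exact hW.ne_of_mem_edges hij hf he₁ rfl
  · exact hW.ne_of_mem_edges hij hf he₂ rfl

end EDPSolution

/-- If `{a, b}` is an edge between two vertices of degree at most 2, no
terminal pair equals `{a, b}`, `a` occurs in at least one terminal pair, `b`
occurs in at least two terminal pairs (counted over the index set), and all
terminal pairs have distinct endpoints, then `(G, P)` is a NO-instance. -/
theorem overloaded_edge_no_instance {V : Type*} [Fintype V] [DecidableEq V]
    (G : SimpleGraph V) [DecidableRel G.Adj] {m : ℕ} (P : Fin m → V × V)
    (hdist : ∀ i, (P i).1 ≠ (P i).2) (a b : V) (hab : G.Adj a b)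
    (hda : G.degree a ≤ 2) (hdb : G.degree b ≤ 2)
    (hnotpair : ∀ i, ¬((P i).1 = a ∧ (P i).2 = b) ∧
      ¬((P i).1 = b ∧ (P i).2 = a))
    (hoa : ∃ i, (P i).1 = a ∨ (P i).2 = a)
    (hob : 2 ≤ (Finset.univ.filter fun i => (P i).1 = b ∨ (P i).2 = b).card) :
    ¬ EDPYes G P := by
  rintro ⟨W, hW⟩
  obtain ⟨j₁, hj₁, j₂, hj₂, hj⟩ := Finset.one_lt_card.mp hob
  simp only [Finset.mem_filter, Finset.mem_univ, true_and] at hj₁ hj₂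
  obtain ⟨j, hjb, hjab⟩ : ∃ j, ((P j).1 = b ∨ (P j).2 = b) ∧ s(a, b) ∈ (W j).edges := by
    rcases hW.mem_edges_or_mem_edges_of_degree_le_two hdb hj (hdist j₁) hj₁ (hdist j₂) hj₂
      ⟨hab, Sym2.mem_mk_right a b⟩ with h | h
    · exact ⟨j₁, hj₁, h⟩
    · exact ⟨j₂, hj₂, h⟩
  have hja : (P j).1 ≠ a ∧ (P j).2 ≠ a := by
    rcases hjb with h | h
    · exact ⟨h ▸ hab.ne.symm, fun h' => (hnotpair j).2 ⟨h, h'⟩⟩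
    · exact ⟨fun h' => (hnotpair j).1 ⟨h', h⟩, h ▸ hab.ne.symm⟩
  obtain ⟨i, hi⟩ := hoa
  exact hW.not_endpoint_of_mem_support_of_degree_le_two hda
    ((W j).fst_mem_support_of_mem_edges hjab) hja.1 hja.2 i (hdist i) hi
end

section
/- Let (G,P) be an EDP instance in which every terminal pair has two distinct endpoints, let c be a vertex of G that occurs in no terminal pair, and let S be a set of vertices of G each of degree 1 whose unique neighbor is c. Suppose every vertex s ∈ S occurs in at least one terminal pair, and no terminal pair has both of its endpoints in S ∪ {c}. If (G,P) is a YES-instance of EDP, then 2·|S| ≤ deg_G(c). -/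
lemma key_next_edge {V : Type*} {G : SimpleGraph V} {s b c : V}
    (W : G.Walk s b) (hW : W.IsPath)
    (S : Finset V) (hS : ∀ t ∈ S, ∀ x, G.Adj t x → x = c)
    (hsS : s ∈ S) (hbc : b ≠ c) (hsb : s ≠ b) (hbS : b ∉ S) :
    ∃ x, G.Adj c x ∧ x ∉ S ∧ s(c, x) ∈ W.edges := by
  cases W with
  | nil => exact absurd rfl hsb
  | cons h W' =>
    rename_i v
    have hv : v = c := hS s hsS v h
    subst hv
    cases W' with
    | nil => exact absurd rfl hbc.symm
    | cons h2 W'' =>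
      rename_i x
      refine ⟨x, h2, ?_, by simp⟩
      intro hxS
      have hxb : x ≠ b := fun hh => hbS (hh ▸ hxS)
      cases W'' with
      | nil => exact hxb rfl
      | cons h3 W''' =>
        rename_i y
        have hy : y = v := hS x hxS y h3
        subst hy
        have := hW.support_nodup
        simp [SimpleGraph.Walk.support_cons] at this


/-- Counting at a branching vertex: let `c` be a non-terminal vertex and `S`
a set of degree-1 vertices whose unique neighbor is `c`, each occurring in at
least one terminal pair, such that no terminal pair has both endpoints in
`S ∪ {c}`. If `(G, P)` is a YES-instance of EDP (with all terminal pairs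
having distinct endpoints), then `2 * |S| ≤ deg c`. -/
theorem leaves_at_branching_vertex {V : Type*} [Fintype V] [DecidableEq V]
    (G : SimpleGraph V) [DecidableRel G.Adj] {m : ℕ} (P : Fin m → V × V)
    (hdist : ∀ i, (P i).1 ≠ (P i).2)
    (c : V) (hc : ∀ i, (P i).1 ≠ c ∧ (P i).2 ≠ c)
    (S : Finset V)
    (hS : ∀ s ∈ S, G.Adj s c ∧ ∀ x, G.Adj s x → x = c)
    (hterm : ∀ s ∈ S, ∃ i, (P i).1 = s ∨ (P i).2 = s)
    (hpair : ∀ i, ¬((P i).1 ∈ S ∪ {c} ∧ (P i).2 ∈ S ∪ {c}))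
    (hyes : EDPYes G P) :
    2 * S.card ≤ G.degree c := by
  rcases S.eq_empty_or_nonempty with rfl | ⟨s0, hs0⟩
  · simp
  have i0 : Fin m := (hterm s0 hs0).choose
  obtain ⟨W, hpath, hdisj⟩ := hyes
  have hSunique : ∀ t ∈ S, ∀ x, G.Adj t x → x = c := fun t ht => (hS t ht).2
  -- for each s ∈ S, produce a terminal index and a "second" edge at c
  have hmain : ∀ s : V, ∃ (x : V) (i : Fin m), s ∈ S →
      G.Adj c x ∧ x ∉ S ∧ s(c, x) ∈ (W i).edges ∧
      ((P i).1 = s ∨ (P i).2 = s) := by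
    intro s
    by_cases hs : s ∈ S
    · obtain ⟨i, hi⟩ := hterm s hs
      rcases hi with hi | hi
      · -- s is the first endpoint
        have hbS : (P i).2 ∉ S := by
          intro hb
          exact hpair i ⟨by simp [hi, hs], by simp [hb]⟩
        obtain ⟨x, hx1, hx2, hx3⟩ := key_next_edge (c := c) (hi ▸ W i)
          (by subst hi; exact hpath i) S hSunique hs (hc i).2
          (hi ▸ hdist i) hbS
        refine ⟨x, i, fun _ => ⟨hx1, hx2, ?_, Or.inl hi⟩⟩
        · subst hi; exact hx3
      · -- s is the second endpoint: use the reversed walk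
        have hbS : (P i).1 ∉ S := by
          intro hb
          exact hpair i ⟨by simp [hb], by simp [hi, hs]⟩
        obtain ⟨x, hx1, hx2, hx3⟩ := key_next_edge (c := c) (hi ▸ (W i).reverse)
          (by subst hi; exact (hpath i).reverse) S hSunique hs (hc i).1
          (hi ▸ (hdist i).symm) hbS
        refine ⟨x, i, fun _ => ⟨hx1, hx2, ?_, Or.inr hi⟩⟩
        · subst hi
          simpa using hx3
    · exact ⟨c, i0, fun h => absurd h hs⟩
  choose x idx hx using hmain
  -- the injection from S × Bool into the neighborhood of c
  have hcard : 2 * S.card = (S ×ˢ (Finset.univ : Finset Bool)).card := by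
    simp [Finset.card_product, mul_comm]
  rw [hcard, ← SimpleGraph.card_neighborFinset_eq_degree]
  apply Finset.card_le_card_of_injOn (fun p => if p.2 then x p.1 else p.1)
  · rintro ⟨s, b⟩ hp
    have hs : s ∈ S := (Finset.mem_product.mp hp).1
    obtain ⟨hx1, hx2, -, -⟩ := hx s hs
    cases b with
    | false => simpa using ((hS s hs).1).symm
    | true => simpa using hx1
  · rintro ⟨s, b⟩ hp ⟨s', b'⟩ hp' heq
    have hs : s ∈ S := (Finset.mem_product.mp hp).1
    have hs' : s' ∈ S := (Finset.mem_product.mp hp').1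
    obtain ⟨hx1, hx2, hx3, hx4⟩ := hx s hs
    obtain ⟨hx1', hx2', hx3', hx4'⟩ := hx s' hs'
    cases b with
    | false => cases b' with
      | false =>
        norm_num at heq; simp [heq]
      | true =>
        norm_num at heq
        exact absurd (heq ▸ hs) hx2'
    | true => cases b' with
      | false =>
        norm_num at heq
        exact absurd (heq ▸ hs') hx2
      | true =>
        norm_num at heq
        suffices h : s = s' by simp [h]
        by_contra hne
        by_cases hii : idx s = idx s'
        · apply hpair (idx s')
          rw [hii] at hx4
          rcases hx4 with h4 | h4 <;> rcases hx4' with h4' | h4'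
          · exact absurd (h4.symm.trans h4') hne
          · exact ⟨by rw [h4]; exact Finset.mem_union_left _ hs,
              by rw [h4']; exact Finset.mem_union_left _ hs'⟩
          · exact ⟨by rw [h4']; exact Finset.mem_union_left _ hs',
              by rw [h4]; exact Finset.mem_union_left _ hs⟩
          · exact absurd (h4.symm.trans h4') hne
        · exact (hdisj _ _ hii _ hx3) (heq ▸ hx3')
end
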